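/- Let (Ω, μ) be a measure space, let f : Ω → ℝ lie in L³(Ω, μ) with ∫ f³ dμ = 1, and let φ, ψ, χ : Ω → ℝ be measurable and essentially bounded. Set a := ∫ φ·f³ dμ, b := ∫ ψ·f³ dμ, c := ∫ χ·f³ dμ, and Δ(φ) := ‖φ·f − a·f‖_{L³}, Δ(ψ) := ‖ψ·f − b·f‖_{L³}, Δ(χ) := ‖χ·f − c·f‖_{L³}. Then Δ(φ)·Δ(ψ)·Δ(χ) ≥ | ∫ φψχ·f³ dμ − ∫ (a·ψχ + b·φχ + c·φψ)·f³ dμ + 2abc |. -/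

import Mathlib

/-!
Expanding the product shows that the right-hand side is the 3-product
`⟨(φ - a) f, (ψ - b) f, (χ - c) f⟩ = ∫ (φ - a)(ψ - b)(χ - c) f³ dμ`, the constant `2abc` coming
from `∫ f³ dμ = 1`. The bound is then the generalized Hölder inequality with exponents `3, 3, 3`.
-/

open MeasureTheory ENNReal

theorem ENNReal.inv_three_add_inv_three_add_inv_three : (3 : ℝ≥0∞)⁻¹ + 3⁻¹ + 3⁻¹ = 1 := by
  rw [← two_mul, ← add_one_mul, two_add_one_eq_three, ENNReal.mul_inv_cancel] <;> norm_num

namespace MeasureTheory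

variable {Ω : Type*} [MeasurableSpace Ω] {μ : Measure Ω}

theorem MemLp.integrable_pow {𝕜 : Type*} [NormedRing 𝕜] {f : Ω → 𝕜} {n : ℕ}
    (hf : MemLp f n μ) (hn : n ≠ 0) : Integrable (fun x => f x ^ n) μ :=
  (hf.integrable_norm_pow hn).mono' (hf.1.pow n)
    (.of_forall fun _ => norm_pow_le' _ (Nat.pos_of_ne_zero hn))

theorem lpNorm_three_eq_integral_abs_pow {g : Ω → ℝ} (hg : AEStronglyMeasurable g μ) :
    lpNorm g 3 μ = (∫ x, |g x| ^ 3 ∂μ) ^ ((1 : ℝ) / 3) := by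
  simpa only [ENNReal.coe_ofNat, NNReal.coe_ofNat, Real.norm_eq_abs, Real.rpow_ofNat, one_div]
    using lpNorm_nnreal_eq_integral_norm_rpow (p := 3) three_ne_zero hg

section Holder

variable {𝕜 : Type*} [NormedRing 𝕜] {g₁ g₂ g₃ : Ω → 𝕜} {p q r : ℝ≥0∞}

theorem eLpNorm_mul_mul_le (hpqr : p⁻¹ + q⁻¹ + r⁻¹ = 1) (h₁ : AEStronglyMeasurable g₁ μ)
    (h₂ : AEStronglyMeasurable g₂ μ) (h₃ : AEStronglyMeasurable g₃ μ) :
    eLpNorm (fun x => g₁ x * g₂ x * g₃ x) 1 μ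
      ≤ eLpNorm g₁ p μ * eLpNorm g₂ q μ * eLpNorm g₃ r μ := by
  set s := (p⁻¹ + q⁻¹)⁻¹
  have : HolderTriple p q s := HolderTriple.of p q
  have : HolderTriple s r 1 := ⟨by rw [inv_inv, hpqr, inv_one]⟩
  have hmul (u v : 𝕜) : ‖u * v‖ ≤ (1 : NNReal) * ‖u‖ * ‖v‖ := by
    simpa only [NNReal.coe_one, one_mul] using norm_mul_le u v
  calc eLpNorm (fun x => g₁ x * g₂ x * g₃ x) 1 μ
      ≤ 1 * eLpNorm (fun x => g₁ x * g₂ x) s μ * eLpNorm g₃ r μ :=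
        eLpNorm_le_eLpNorm_mul_eLpNorm'_of_norm (f := fun x => g₁ x * g₂ x) (h₁.mul h₂) h₃ _ _
          (.of_forall fun _ => hmul _ _)
    _ ≤ 1 * (1 * eLpNorm g₁ p μ * eLpNorm g₂ q μ) * eLpNorm g₃ r μ := by
        gcongr
        exact eLpNorm_le_eLpNorm_mul_eLpNorm'_of_norm h₁ h₂ _ _ (.of_forall fun _ => hmul _ _)
    _ = eLpNorm g₁ p μ * eLpNorm g₂ q μ * eLpNorm g₃ r μ := by simp only [one_mul]

theorem norm_integral_mul_mul_le_lpNorm [NormedSpace ℝ 𝕜] (hpqr : p⁻¹ + q⁻¹ + r⁻¹ = 1)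
    (h₁ : MemLp g₁ p μ) (h₂ : MemLp g₂ q μ) (h₃ : MemLp g₃ r μ) :
    ‖∫ x, g₁ x * g₂ x * g₃ x ∂μ‖ ≤ lpNorm g₁ p μ * lpNorm g₂ q μ * lpNorm g₃ r μ := by
  have hprod : AEStronglyMeasurable (fun x => g₁ x * g₂ x * g₃ x) μ := (h₁.1.mul h₂.1).mul h₃.1
  calc ‖∫ x, g₁ x * g₂ x * g₃ x ∂μ‖ ≤ ∫ x, ‖g₁ x * g₂ x * g₃ x‖ ∂μ :=
        norm_integral_le_integral_norm _
    _ = (eLpNorm (fun x => g₁ x * g₂ x * g₃ x) 1 μ).toReal := by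
        rw [toReal_eLpNorm hprod, lpNorm_one_eq_integral_norm hprod]
    _ ≤ (eLpNorm g₁ p μ * eLpNorm g₂ q μ * eLpNorm g₃ r μ).toReal :=
        toReal_mono (by finiteness [h₁.eLpNorm_ne_top, h₂.eLpNorm_ne_top, h₃.eLpNorm_ne_top])
          (eLpNorm_mul_mul_le hpqr h₁.1 h₂.1 h₃.1)
    _ = lpNorm g₁ p μ * lpNorm g₂ q μ * lpNorm g₃ r μ := by
        rw [toReal_mul, toReal_mul, toReal_eLpNorm h₁.1, toReal_eLpNorm h₂.1, toReal_eLpNorm h₃.1]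

end Holder

theorem integral_sub_mul_sub_mul_sub_mul {w φ ψ χ : Ω → ℝ} (hw : Integrable w μ)
    (hφ : MemLp φ ∞ μ) (hψ : MemLp ψ ∞ μ) (hχ : MemLp χ ∞ μ) (a b c : ℝ) :
    ∫ x, (φ x - a) * (ψ x - b) * (χ x - c) * w x ∂μ
      = (∫ x, φ x * ψ x * χ x * w x ∂μ)
        - (∫ x, (a * (ψ x * χ x) + b * (φ x * χ x) + c * (φ x * ψ x)) * w x ∂μ)
        + a * b * (∫ x, χ x * w x ∂μ) + b * c * (∫ x, φ x * w x ∂μ)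
        + c * a * (∫ x, ψ x * w x ∂μ) - a * b * c * ∫ x, w x ∂μ := by
  have hweighted {θ : Ω → ℝ} (hθ : MemLp θ ∞ μ) : Integrable (fun x => θ x * w x) μ :=
    hw.mul_of_top_right hθ
  have hmul {θ θ' : Ω → ℝ} (hθ : MemLp θ ∞ μ) (hθ' : MemLp θ' ∞ μ) :
      MemLp (fun x => θ x * θ' x) ∞ μ :=
    hθ'.mul' hθ
  have hcubic := hweighted (hmul (hmul hφ hψ) hχ)
  have hquadratic := hweighted ((((hmul hψ hχ).const_mul a).add ((hmul hφ hχ).const_mul b)).add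
    ((hmul hφ hψ).const_mul c))
  have hφw := hweighted hφ
  have hψw := hweighted hψ
  have hχw := hweighted hχ
  calc ∫ x, (φ x - a) * (ψ x - b) * (χ x - c) * w x ∂μ
      = ∫ x, (φ x * ψ x * χ x * w x
          - (a * (ψ x * χ x) + b * (φ x * χ x) + c * (φ x * ψ x)) * w x
          + a * b * (χ x * w x) + b * c * (φ x * w x) + c * a * (ψ x * w x)
          - a * b * c * w x) ∂μ := by
        congr with x; ring
    _ = _ := by
        rw [integral_sub, integral_add, integral_add, integral_add, integral_sub,
          integral_const_mul, integral_const_mul, integral_const_mul, integral_const_mul]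
        all_goals fun_prop

end MeasureTheory

theorem L3_uncertainty_product_lower_bound_general
    {Ω : Type*} [MeasurableSpace Ω] (μ : Measure Ω)
    (f φ ψ χ : Ω → ℝ)
    (hf : MemLp f 3 μ) (hf1 : ∫ x, (f x) ^ 3 ∂μ = 1)
    (hφb : MemLp φ ⊤ μ)
    (hψb : MemLp ψ ⊤ μ)
    (hχb : MemLp χ ⊤ μ)
    (a b c : ℝ)
    (ha : a = ∫ x, φ x * (f x) ^ 3 ∂μ)
    (hb : b = ∫ x, ψ x * (f x) ^ 3 ∂μ)
    (hc : c = ∫ x, χ x * (f x) ^ 3 ∂μ)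
    (Δφ Δψ Δχ : ℝ)
    (hΔφ : Δφ = (∫ x, |φ x * f x - a * f x| ^ 3 ∂μ) ^ ((1 : ℝ) / 3))
    (hΔψ : Δψ = (∫ x, |ψ x * f x - b * f x| ^ 3 ∂μ) ^ ((1 : ℝ) / 3))
    (hΔχ : Δχ = (∫ x, |χ x * f x - c * f x| ^ 3 ∂μ) ^ ((1 : ℝ) / 3)) :
    Δφ * Δψ * Δχ
      ≥ |(∫ x, φ x * ψ x * χ x * (f x) ^ 3 ∂μ)
          - (∫ x, (a * (ψ x * χ x) + b * (φ x * χ x) + c * (φ x * ψ x)) * (f x) ^ 3 ∂μ)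
          + 2 * a * b * c| := by
  have hcentered {θ : Ω → ℝ} (t : ℝ) (hθ : MemLp θ ∞ μ) :
      MemLp (fun x => θ x * f x - t * f x) 3 μ :=
    (hf.mul' hθ).sub (hf.const_mul t)
  have hexpand : ∫ x, (φ x * f x - a * f x) * (ψ x * f x - b * f x) * (χ x * f x - c * f x) ∂μ
      = (∫ x, φ x * ψ x * χ x * (f x) ^ 3 ∂μ)
          - (∫ x, (a * (ψ x * χ x) + b * (φ x * χ x) + c * (φ x * ψ x)) * (f x) ^ 3 ∂μ)
          + 2 * a * b * c := by
    have hcube : Integrable (fun x => f x ^ 3) μ :=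
      MemLp.integrable_pow (n := 3) (by exact_mod_cast hf) three_ne_zero
    calc _ = ∫ x, (φ x - a) * (ψ x - b) * (χ x - c) * f x ^ 3 ∂μ := by
          congr with x; ring
      _ = _ := by
          rw [integral_sub_mul_sub_mul_sub_mul hcube hφb hψb hχb, ← ha, ← hb, ← hc, hf1]
          ring
  rw [hΔφ, hΔψ, hΔχ, ← lpNorm_three_eq_integral_abs_pow (hcentered a hφb).1,
    ← lpNorm_three_eq_integral_abs_pow (hcentered b hψb).1,
    ← lpNorm_three_eq_integral_abs_pow (hcentered c hχb).1, ge_iff_le, ← hexpand,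
    ← Real.norm_eq_abs]
  exact norm_integral_mul_mul_le_lpNorm inv_three_add_inv_three_add_inv_three
    (hcentered a hφb) (hcentered b hψb) (hcentered c hχb)

/-- On `L³(Ω, μ)`, for a state `f` with `∫ f³ = 1` and essentially bounded measurable
multipliers `φ, ψ, χ` with 3-expectations `a, b, c` and 3-uncertainties `Δ(φ), Δ(ψ), Δ(χ)`:
`Δ(φ)Δ(ψ)Δ(χ) ≥ |∫ φψχ f³ dμ − ∫ (aψχ + bφχ + cφψ) f³ dμ + 2abc|`. -/
theorem L3_uncertainty_product_lower_bound
    {Ω : Type*} [MeasurableSpace Ω] (μ : Measure Ω)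
    (f φ ψ χ : Ω → ℝ)
    (hf : MemLp f 3 μ) (hf1 : ∫ x, (f x) ^ 3 ∂μ = 1)
    (hφm : Measurable φ) (hφb : MemLp φ ⊤ μ)
    (hψm : Measurable ψ) (hψb : MemLp ψ ⊤ μ)
    (hχm : Measurable χ) (hχb : MemLp χ ⊤ μ)
    (a b c : ℝ)
    (ha : a = ∫ x, φ x * (f x) ^ 3 ∂μ)
    (hb : b = ∫ x, ψ x * (f x) ^ 3 ∂μ)
    (hc : c = ∫ x, χ x * (f x) ^ 3 ∂μ)
    (Δφ Δψ Δχ : ℝ)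
    (hΔφ : Δφ = (∫ x, |φ x * f x - a * f x| ^ 3 ∂μ) ^ ((1 : ℝ) / 3))
    (hΔψ : Δψ = (∫ x, |ψ x * f x - b * f x| ^ 3 ∂μ) ^ ((1 : ℝ) / 3))
    (hΔχ : Δχ = (∫ x, |χ x * f x - c * f x| ^ 3 ∂μ) ^ ((1 : ℝ) / 3)) :
    Δφ * Δψ * Δχ
      ≥ |(∫ x, φ x * ψ x * χ x * (f x) ^ 3 ∂μ)
          - (∫ x, (a * (ψ x * χ x) + b * (φ x * χ x) + c * (φ x * ψ x)) * (f x) ^ 3 ∂μ)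
          + 2 * a * b * c| :=
  L3_uncertainty_product_lower_bound_general μ f φ ψ χ hf hf1 hφb hψb hχb a b c ha hb hc Δφ Δψ Δχ
    hΔφ hΔψ hΔχ
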